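/- arXiv:2411.02046 — 6 statements merged into one kernel-verified Lean document; each statement's English description precedes it below -/
import Mathlib

section
/- For every d ≥ 2 and every ψ ∈ (0,1/4), there exists a constant c_ψ > 0 such that the following holds. Let (qᵢ)_{i∈ℕ} be a sequence of points of ℝ^d and let k* ∈ ℕ be such that: (i) ‖q_{i+1} − qᵢ‖ ≤ ‖qᵢ‖^{3/4} for all i ≥ k*; (ii) ‖qᵢ‖ ≥ 3^{1/ψ} for all i ≥ k*; and (iii) dist(qᵢ, segment[0, q_j]) ≤ ‖q_j‖^{1−ψ} for all i, j with j ≥ k* and i ≤ j. Then for all i, j with j > i ≥ k*, one has θ(qᵢ, q_j) ≤ c_ψ · ‖qᵢ‖^{−ψ}. -/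
open Metric InnerProductGeometry Real RealInnerProductSpace

private lemma jordan_ineq {θ : ℝ} (h0 : 0 ≤ θ) (h2 : θ ≤ π/2) : θ ≤ π/2 * Real.sin θ := by
  have hπ := Real.pi_pos
  have hconc := strictConcaveOn_sin_Icc.concaveOn
  have h01 : (0:ℝ) ∈ Set.Icc (0:ℝ) π := ⟨le_refl _, hπ.le⟩
  have hp2 : π/2 ∈ Set.Icc (0:ℝ) π := ⟨by positivity, by linarith⟩
  set b : ℝ := θ / (π/2) with hb
  have hpos2 : (0:ℝ) < π/2 := by linarith
  have hb0 : 0 ≤ b := div_nonneg h0 hpos2.le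
  have hb1 : b ≤ 1 := (div_le_one hpos2).2 h2
  have hkey := hconc.2 h01 hp2 (by linarith : (0:ℝ) ≤ 1 - b) hb0 (by ring)
  have harg : (1-b) • (0:ℝ) + b • (π/2) = θ := by
    simp [smul_eq_mul, hb, div_mul_cancel₀ _ hpos2.ne']
  rw [harg] at hkey
  simp [smul_eq_mul] at hkey
  -- hkey : b ≤ sin θ
  have : θ = b * (π/2) := by rw [hb]; field_simp
  nlinarith [hkey]

private lemma angle_triangle_aux {V : Type*} [NormedAddCommGroup V] [InnerProductSpace ℝ V]
    {u v w : V} (hu : ‖u‖ = 1) (hv : ‖v‖ = 1) (hw : ‖w‖ = 1) :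
    angle u w ≤ angle u v + angle v w := by
  rcases le_or_gt π (angle u v + angle v w) with h | h
  · exact (angle_le_pi u w).trans h
  have h0uv := angle_nonneg u v
  have h0vw := angle_nonneg v w
  have hπuv := angle_le_pi u v
  have hπvw := angle_le_pi v w
  by_contra hcon
  push_neg at hcon
  have hcos := Real.cos_lt_cos_of_nonneg_of_le_pi (by linarith) (angle_le_pi u w) hcon
  rw [Real.cos_add] at hcos
  set a : ℝ := ⟪u, v⟫ with ha
  set b : ℝ := ⟪v, w⟫ with hbb
  have cuv : Real.cos (angle u v) = a := by rw [cos_angle, hu, hv]; simp [ha]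
  have cvw : Real.cos (angle v w) = b := by rw [cos_angle, hv, hw]; simp [hbb]
  have cuw : Real.cos (angle u w) = ⟪u, w⟫ := by rw [cos_angle, hu, hw]; simp
  have suv : Real.sin (angle u v) = Real.sqrt (1 - a^2) := by
    rw [Real.sin_eq_sqrt_one_sub_cos_sq h0uv hπuv, cuv]
  have svw : Real.sin (angle v w) = Real.sqrt (1 - b^2) := by
    rw [Real.sin_eq_sqrt_one_sub_cos_sq h0vw hπvw, cvw]
  have hvv : ⟪v, v⟫ = 1 := by rw [real_inner_self_eq_norm_sq, hv]; norm_num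
  have hCS := abs_real_inner_le_norm (u - a • v) (w - b • v)
  have hinner : ⟪u - a • v, w - b • v⟫ = ⟪u, w⟫ - a*b := by
    rw [inner_sub_left, inner_sub_right, inner_sub_right, real_inner_smul_left,
      real_inner_smul_left, real_inner_smul_right, real_inner_smul_right, hvv, ← ha, ← hbb]
    ring
  have hnu : ‖u - a • v‖ = Real.sqrt (1 - a^2) := by
    have h2 : ‖u - a • v‖^2 = 1 - a^2 := by
      rw [norm_sub_sq_real, real_inner_smul_right, norm_smul, hu, hv, Real.norm_eq_abs,
        mul_one, sq_abs, ← ha]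
      ring
    rw [← h2, Real.sqrt_sq (norm_nonneg _)]
  have hnw : ‖w - b • v‖ = Real.sqrt (1 - b^2) := by
    have h2 : ‖w - b • v‖^2 = 1 - b^2 := by
      rw [norm_sub_sq_real, real_inner_smul_right, norm_smul, hw, hv, Real.norm_eq_abs,
        mul_one, sq_abs, real_inner_comm v w, ← hbb]
      ring
    rw [← h2, Real.sqrt_sq (norm_nonneg _)]
  rw [hinner, hnu, hnw] at hCS
  rw [cuv, cvw, suv, svw, cuw] at hcos
  have := (abs_le.1 hCS).1
  linarith

private lemma angle_triangle' {V : Type*} [NormedAddCommGroup V] [InnerProductSpace ℝ V]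
    (x y z : V) : angle x z ≤ angle x y + angle y z := by
  rcases eq_or_ne x 0 with rfl | hx
  · rw [angle_zero_left, angle_zero_left]; linarith [angle_nonneg y z]
  rcases eq_or_ne y 0 with rfl | hy
  · rw [angle_zero_right, angle_zero_left]; linarith [angle_le_pi x z]
  rcases eq_or_ne z 0 with rfl | hz
  · rw [angle_zero_right, angle_zero_right]; linarith [angle_nonneg x y]
  have hxp : (0:ℝ) < ‖x‖⁻¹ := inv_pos.2 (norm_pos_iff.2 hx)
  have hyp : (0:ℝ) < ‖y‖⁻¹ := inv_pos.2 (norm_pos_iff.2 hy)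
  have hzp : (0:ℝ) < ‖z‖⁻¹ := inv_pos.2 (norm_pos_iff.2 hz)
  have hu : ‖(‖x‖⁻¹ : ℝ) • x‖ = 1 := norm_smul_inv_norm hx
  have hv : ‖(‖y‖⁻¹ : ℝ) • y‖ = 1 := norm_smul_inv_norm hy
  have hw : ‖(‖z‖⁻¹ : ℝ) • z‖ = 1 := norm_smul_inv_norm hz
  calc angle x z = angle ((‖x‖⁻¹ : ℝ) • x) ((‖z‖⁻¹ : ℝ) • z) := by
        rw [angle_smul_left_of_pos _ _ hxp, angle_smul_right_of_pos _ _ hzp]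
    _ ≤ angle ((‖x‖⁻¹ : ℝ) • x) ((‖y‖⁻¹ : ℝ) • y)
        + angle ((‖y‖⁻¹ : ℝ) • y) ((‖z‖⁻¹ : ℝ) • z) := angle_triangle_aux hu hv hw
    _ = angle x y + angle y z := by
        rw [angle_smul_left_of_pos _ _ hxp, angle_smul_right_of_pos _ _ hyp,
          angle_smul_left_of_pos _ _ hyp, angle_smul_right_of_pos _ _ hzp]

private lemma angle_le_of_dist_segment {V : Type*} [NormedAddCommGroup V] [InnerProductSpace ℝ V]
    {x y : V} {D : ℝ} (hx : x ≠ 0) (hy : y ≠ 0)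
    (hd : Metric.infDist x (segment ℝ 0 y) ≤ D) (hD : 2*D ≤ ‖x‖) :
    angle x y ≤ π/2 * (D / ‖x‖) := by
  have hx0 : (0:ℝ) < ‖x‖ := norm_pos_iff.2 hx
  have hy0 : (0:ℝ) < ‖y‖ := norm_pos_iff.2 hy
  have hD0 : 0 ≤ D := le_trans (Metric.infDist_nonneg) hd
  have hcomp : IsCompact (segment ℝ (0:V) y) := by
    rw [segment_eq_image ℝ]
    exact isCompact_Icc.image (by fun_prop)
  obtain ⟨p, hp, hdp⟩ := hcomp.exists_infDist_eq_dist ⟨0, left_mem_segment ℝ 0 y⟩ x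
  have hxp : ‖x - p‖ ≤ D := by
    rw [← dist_eq_norm]; rw [hdp] at hd; exact hd
  rw [segment_eq_image ℝ] at hp
  obtain ⟨s, ⟨hs0, hs1⟩, hps⟩ := hp
  have hps' : p = s • y := by rw [← hps]; simp
  subst hps'
  -- inner product lower bound
  have hCS := abs_real_inner_le_norm (x - s • y) y
  have hin : ⟪x - s • y, y⟫ = ⟪x, y⟫ - s * ⟪y, y⟫ := by
    rw [inner_sub_left, real_inner_smul_left]
  have hyy : ⟪y, y⟫ = ‖y‖^2 := real_inner_self_eq_norm_sq y
  have hnp : ‖(s:ℝ) • y‖ = s * ‖y‖ := by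
    rw [norm_smul, Real.norm_eq_abs, abs_of_nonneg hs0]
  have hnorms : ‖x‖ - D ≤ s * ‖y‖ := by
    have := norm_sub_norm_le x (s • y)
    rw [hnp] at this
    linarith
  have hip : (‖x‖ - 2*D) * ‖y‖ ≤ ⟪x, y⟫ := by
    rw [hin, hyy] at hCS
    have h1 := (abs_le.1 hCS).1
    have h2 : ‖x - s • y‖ * ‖y‖ ≤ D * ‖y‖ :=
      mul_le_mul_of_nonneg_right hxp hy0.le
    nlinarith
  have hipnn : 0 ≤ ⟪x, y⟫ := le_trans (by nlinarith) hip
  -- angle ≤ π/2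
  have hang2 : angle x y ≤ π/2 := by
    rw [angle]
    exact Real.arccos_le_pi_div_two.2 (div_nonneg hipnn (by positivity))
  -- sin bound
  have hsin : Real.sin (angle x y) * (‖x‖ * ‖y‖) ≤ D * ‖y‖ := by
    rw [sin_angle_mul_norm_mul_norm]
    have hexp : ‖x - s • y‖^2 = ‖x‖^2 - 2*s*⟪x, y⟫ + s^2*‖y‖^2 := by
      rw [norm_sub_sq_real, real_inner_smul_right, hnp]
      ring
    have hsq : ‖x - s • y‖^2 ≤ D^2 := by nlinarith [norm_nonneg (x - s • y)]
    have hkey : ⟪x, x⟫ * ⟪y, y⟫ - ⟪x, y⟫ * ⟪x, y⟫ ≤ (D * ‖y‖)^2 := by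
      rw [real_inner_self_eq_norm_sq, real_inner_self_eq_norm_sq]
      nlinarith [sq_nonneg (s * ‖y‖^2 - ⟪x, y⟫), sq_nonneg ‖y‖]
    calc Real.sqrt (⟪x, x⟫ * ⟪y, y⟫ - ⟪x, y⟫ * ⟪x, y⟫)
        ≤ Real.sqrt ((D * ‖y‖)^2) := Real.sqrt_le_sqrt hkey
      _ = D * ‖y‖ := Real.sqrt_sq (by positivity)
  have hsin' : Real.sin (angle x y) ≤ D / ‖x‖ := by
    rw [le_div_iff₀ hx0]
    nlinarith [hsin, hy0]
  calc angle x y ≤ π/2 * Real.sin (angle x y) := jordan_ineq (angle_nonneg x y) hang2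
    _ ≤ π/2 * (D / ‖x‖) := by
        have := Real.pi_pos
        nlinarith

set_option maxHeartbeats 1000000 in
/-- Howard–Newman straightness lemma: under the stated conditions on the sequence
`(qᵢ)`, the angles `θ(qᵢ, q_j)` for `j > i ≥ k*` are at most `c_ψ ‖qᵢ‖^{-ψ}`. -/
theorem angle_bound_of_straightness
    (d : ℕ) (hd : 2 ≤ d) (ψ : ℝ) (hψ : ψ ∈ Set.Ioo (0 : ℝ) (1/4)) :
    ∃ c : ℝ, 0 < c ∧
      ∀ (q : ℕ → EuclideanSpace ℝ (Fin d)) (kstar : ℕ),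
        (∀ i, kstar ≤ i → ‖q (i + 1) - q i‖ ≤ ‖q i‖ ^ ((3 : ℝ)/4)) →
        (∀ i, kstar ≤ i → (3 : ℝ) ^ (1/ψ) ≤ ‖q i‖) →
        (∀ i j, kstar ≤ j → i ≤ j →
          Metric.infDist (q i) (segment ℝ 0 (q j)) ≤ ‖q j‖ ^ (1 - ψ)) →
        ∀ i j, kstar ≤ i → i < j →
          InnerProductGeometry.angle (q i) (q j) ≤ c * ‖q i‖ ^ (-ψ) := by
  classical
  obtain ⟨hψ0, hψ4⟩ := hψ
  have hπ := Real.pi_pos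
  set κ : ℝ := (9/8 : ℝ) ^ (-ψ) with hκ
  have hκ1 : κ < 1 := Real.rpow_lt_one_of_one_lt_of_neg (by norm_num) (by linarith)
  have hκ0 : 0 < κ := Real.rpow_pos_of_pos (by norm_num) _
  have h1κ : 0 < 1 - κ := by linarith
  refine ⟨3*π/4 / (1 - κ), div_pos (by linarith) h1κ, ?_⟩
  intro q kstar hstep hnorm hdist
  set c : ℝ := 3*π/4 / (1 - κ) with hcdef
  have hcpos : 0 < c := div_pos (by linarith) h1κ
  have hc : 3*π/4 + c * κ = c := by
    rw [hcdef]; field_simp; ring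
  -- basic size facts
  have hbig : ∀ l, kstar ≤ l → (81:ℝ) ≤ ‖q l‖ := by
    intro l hl
    refine le_trans ?_ (hnorm l hl)
    have h4 : (4:ℝ) ≤ 1/ψ := by rw [le_div_iff₀ hψ0]; linarith
    calc (81:ℝ) = 3 ^ (4:ℝ) := by
          rw [show (4:ℝ) = ((4:ℕ):ℝ) by norm_num, Real.rpow_natCast]; norm_num
      _ ≤ 3 ^ (1/ψ) := Real.rpow_le_rpow_of_exponent_le (by norm_num) h4
  have hpos : ∀ l, kstar ≤ l → (0:ℝ) < ‖q l‖ :=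
    fun l hl => lt_of_lt_of_le (by norm_num) (hbig l hl)
  have hne : ∀ l, kstar ≤ l → q l ≠ 0 := fun l hl => norm_pos_iff.1 (hpos l hl)
  have hpowψ : ∀ l, kstar ≤ l → (3:ℝ) ≤ ‖q l‖ ^ ψ := by
    intro l hl
    calc (3:ℝ) = ((3:ℝ) ^ (1/ψ)) ^ ψ := by
          rw [← Real.rpow_mul (by norm_num), one_div, inv_mul_cancel₀ hψ0.ne', Real.rpow_one]
      _ ≤ ‖q l‖ ^ ψ := Real.rpow_le_rpow (by positivity) (hnorm l hl) hψ0.le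
  -- step growth
  have hgrow : ∀ l, kstar ≤ l → ‖q (l+1)‖ ≤ 4/3 * ‖q l‖ := by
    intro l hl
    have h1 : ‖q (l+1)‖ ≤ ‖q l‖ + ‖q l‖ ^ ((3:ℝ)/4) := by
      have := norm_add_le (q l) (q (l+1) - q l)
      simp only [add_sub_cancel] at this
      linarith [hstep l hl]
    have hql := hbig l hl
    have h2 : ‖q l‖ ^ ((3:ℝ)/4) ≤ 1/3 * ‖q l‖ := by
      have e : ‖q l‖ = ‖q l‖ ^ ((3:ℝ)/4) * ‖q l‖ ^ ((1:ℝ)/4) := by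
        rw [← Real.rpow_add (by linarith), show (3:ℝ)/4 + 1/4 = 1 by norm_num, Real.rpow_one]
      have h3 : (3:ℝ) ≤ ‖q l‖ ^ ((1:ℝ)/4) := by
        calc (3:ℝ) = (81:ℝ) ^ ((1:ℝ)/4) := by
              rw [show (81:ℝ) = 3^(4:ℕ) by norm_num, ← Real.rpow_natCast 3 4,
                ← Real.rpow_mul (by norm_num)]
              norm_num
          _ ≤ ‖q l‖ ^ ((1:ℝ)/4) := Real.rpow_le_rpow (by norm_num) hql (by norm_num)
      have hp34 : 0 < ‖q l‖ ^ ((3:ℝ)/4) := Real.rpow_pos_of_pos (by linarith) _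
      nlinarith
    linarith
  -- base angle bound
  have base : ∀ a b : ℕ, kstar ≤ a → a ≤ b → ‖q b‖ ≤ 3/2 * ‖q a‖ →
      angle (q a) (q b) ≤ 3*π/4 * ‖q a‖ ^ (-ψ) := by
    intro a b ha hab hb
    have hpa := hpos a ha
    have hda := hdist a b (ha.trans hab) hab
    have hDle : ‖q b‖ ^ (1-ψ) ≤ 3/2 * ‖q a‖ ^ (1-ψ) := by
      have hp1 : 0 < ‖q a‖ ^ (1-ψ) := Real.rpow_pos_of_pos hpa _
      calc ‖q b‖ ^ (1-ψ) ≤ (3/2 * ‖q a‖) ^ (1-ψ) :=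
            Real.rpow_le_rpow (norm_nonneg _) hb (by linarith)
        _ = (3/2:ℝ) ^ (1-ψ) * ‖q a‖ ^ (1-ψ) := Real.mul_rpow (by norm_num) (norm_nonneg _)
        _ ≤ 3/2 * ‖q a‖ ^ (1-ψ) := by
            have h32 : (3/2:ℝ) ^ (1-ψ) ≤ (3/2:ℝ) ^ (1:ℝ) :=
              Real.rpow_le_rpow_of_exponent_le (by norm_num) (by linarith)
            rw [Real.rpow_one] at h32
            nlinarith
    have hinf : Metric.infDist (q a) (segment ℝ 0 (q b)) ≤ 3/2 * ‖q a‖ ^ (1-ψ) :=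
      hda.trans hDle
    have h2D : 2*(3/2 * ‖q a‖ ^ (1-ψ)) ≤ ‖q a‖ := by
      have e : ‖q a‖ = ‖q a‖ ^ (1-ψ) * ‖q a‖ ^ ψ := by
        rw [← Real.rpow_add hpa, sub_add_cancel, Real.rpow_one]
      have h3 := hpowψ a ha
      have hp1 : 0 < ‖q a‖ ^ (1-ψ) := Real.rpow_pos_of_pos hpa _
      nlinarith
    have hang := angle_le_of_dist_segment (hne a ha) (hne b (ha.trans hab)) hinf h2D
    have e2 : (3/2 * ‖q a‖ ^ (1-ψ)) / ‖q a‖ = 3/2 * ‖q a‖ ^ (-ψ) := by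
      have := Real.rpow_sub hpa (1-ψ) 1
      rw [Real.rpow_one, show (1-ψ) - 1 = -ψ by ring] at this
      rw [mul_div_assoc, ← this]
    calc angle (q a) (q b) ≤ π/2 * ((3/2 * ‖q a‖ ^ (1-ψ)) / ‖q a‖) := hang
      _ = 3*π/4 * ‖q a‖ ^ (-ψ) := by rw [e2]; ring
  -- main induction on the range length
  have main : ∀ n : ℕ, ∀ i j : ℕ, kstar ≤ i → i < j → j ≤ i + n →
      angle (q i) (q j) ≤ c * ‖q i‖ ^ (-ψ) := by
    intro n
    induction n with
    | zero => intro i j hi hij hji; omega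
    | succ n ih =>
      intro i j hi hij hji
      have hpi := hpos i hi
      have hri : (0:ℝ) < ‖q i‖ ^ (-ψ) := Real.rpow_pos_of_pos hpi _
      have hc34 : 3*π/4 ≤ c := by nlinarith [mul_pos hcpos hκ0]
      by_cases hS : ∃ l, (i < l ∧ l ≤ j) ∧ (9/8:ℝ) * ‖q i‖ < ‖q l‖
      · obtain ⟨m, ⟨⟨him, hmj⟩, hqm⟩, hmmin⟩ :
            ∃ m, (((i < m ∧ m ≤ j) ∧ (9/8:ℝ) * ‖q i‖ < ‖q m‖) ∧
              ∀ l, l < m → ¬((i < l ∧ l ≤ j) ∧ (9/8:ℝ) * ‖q i‖ < ‖q l‖)) :=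
          ⟨Nat.find hS, Nat.find_spec hS, fun l hl => Nat.find_min hS hl⟩
        have hmlow : ‖q (m-1)‖ ≤ 9/8 * ‖q i‖ := by
          rcases Nat.lt_or_ge (m-1) (i+1) with h' | h'
          · have hmi : m - 1 = i := by omega
            rw [hmi]; nlinarith
          · have hlt : m - 1 < m := by omega
            have hnot := hmmin (m-1) hlt
            by_contra hcon
            exact hnot ⟨⟨by omega, by omega⟩, by linarith [lt_of_not_ge hcon]⟩
        have hm1 : kstar ≤ m - 1 := by omega
        have hmid : ‖q m‖ ≤ 3/2 * ‖q i‖ := by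
          have hg := hgrow (m-1) hm1
          rw [Nat.sub_add_cancel (by omega : 1 ≤ m)] at hg
          nlinarith
        have hbase := base i m hi him.le hmid
        rcases eq_or_lt_of_le hmj with rfl | hmj'
        · exact hbase.trans (by nlinarith)
        · have hkm : kstar ≤ m := by omega
          have hIH := ih m j hkm hmj' (by omega)
          have htri := angle_triangle' (q i) (q m) (q j)
          have hqmneg : ‖q m‖ ^ (-ψ) ≤ κ * ‖q i‖ ^ (-ψ) := by
            have h1 : (9/8:ℝ) * ‖q i‖ ≤ ‖q m‖ := hqm.le
            calc ‖q m‖ ^ (-ψ) ≤ ((9/8:ℝ) * ‖q i‖) ^ (-ψ) :=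
                  Real.rpow_le_rpow_of_nonpos (by positivity) h1 (by linarith)
              _ = κ * ‖q i‖ ^ (-ψ) := Real.mul_rpow (by norm_num) (norm_nonneg _)
          have hrm : 0 ≤ ‖q m‖ ^ (-ψ) := Real.rpow_nonneg (norm_nonneg _) _
          calc angle (q i) (q j) ≤ angle (q i) (q m) + angle (q m) (q j) := htri
            _ ≤ 3*π/4 * ‖q i‖ ^ (-ψ) + c * ‖q m‖ ^ (-ψ) := add_le_add hbase hIH
            _ ≤ 3*π/4 * ‖q i‖ ^ (-ψ) + c * (κ * ‖q i‖ ^ (-ψ)) := by nlinarith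
            _ = (3*π/4 + c * κ) * ‖q i‖ ^ (-ψ) := by ring
            _ = c * ‖q i‖ ^ (-ψ) := by rw [hc]
      · push_neg at hS
        have hj : ‖q j‖ ≤ 3/2 * ‖q i‖ := by
          have := hS j ⟨hij, le_refl j⟩
          nlinarith
        exact (base i j hi hij.le hj).trans (by nlinarith)
  intro i j hi hij
  exact main (j - i) i j hi hij (by omega)
end

section
/- Let d ≥ 1 and let x, y, v ∈ ℝ^d and R ≥ 0. If dist(v, segment[x,y]) ≥ R, then ‖x − v‖ + ‖y − v‖ ≥ 2·√(‖x − y‖²/4 + R²). -/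
open RealInnerProductSpace
set_option maxHeartbeats 1000000

private lemma sqrt_key (s t R : ℝ) (hs : 0 ≤ s) (ht : 0 ≤ t) (hR : 0 ≤ R) :
    2 * Real.sqrt ((s + t) ^ 2 / 4 + R ^ 2)
      ≤ Real.sqrt (s ^ 2 + R ^ 2) + Real.sqrt (t ^ 2 + R ^ 2) := by
  set a := Real.sqrt (s ^ 2 + R ^ 2) with ha
  set b := Real.sqrt (t ^ 2 + R ^ 2) with hb
  have ha0 : 0 ≤ a := Real.sqrt_nonneg _
  have hb0 : 0 ≤ b := Real.sqrt_nonneg _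
  have ha2 : a ^ 2 = s ^ 2 + R ^ 2 := Real.sq_sqrt (by positivity)
  have hb2 : b ^ 2 = t ^ 2 + R ^ 2 := Real.sq_sqrt (by positivity)
  have hab : s * t + R ^ 2 ≤ a * b := by
    rw [ha, hb, ← Real.sqrt_mul (by positivity)]
    rw [show s * t + R ^ 2 = Real.sqrt ((s * t + R ^ 2) ^ 2) from
      (Real.sqrt_sq (by positivity)).symm]
    apply Real.sqrt_le_sqrt
    nlinarith [sq_nonneg (s - t), sq_nonneg (s * R - t * R)]
  have h1 : (s + t) ^ 2 / 4 + R ^ 2 ≤ ((a + b) / 2) ^ 2 := by nlinarith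
  calc 2 * Real.sqrt ((s + t) ^ 2 / 4 + R ^ 2)
      ≤ 2 * Real.sqrt (((a + b) / 2) ^ 2) := by
        have := Real.sqrt_le_sqrt h1
        linarith
    _ = a + b := by rw [Real.sqrt_sq (by positivity)]; ring

/-- Plane-geometry estimate: if `v` is at distance at least `R` from the segment
joining `x` and `y`, then `‖x−v‖ + ‖y−v‖ ≥ 2√(‖x−y‖²/4 + R²)`. -/
theorem sum_dist_ge_of_infDist_segment_ge
    (d : ℕ) (hd : 1 ≤ d) (x y v : EuclideanSpace ℝ (Fin d)) (R : ℝ) (hR : 0 ≤ R)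
    (h : R ≤ Metric.infDist v (segment ℝ x y)) :
    2 * Real.sqrt (‖x - y‖ ^ 2 / 4 + R ^ 2) ≤ ‖x - v‖ + ‖y - v‖ := by
  have hcomp : IsCompact (segment ℝ x y) := by
    rw [segment_eq_image ℝ x y]
    exact isCompact_Icc.image (by fun_prop)
  obtain ⟨p, hpmem, hp⟩ := hcomp.exists_infDist_eq_dist ⟨x, left_mem_segment ℝ x y⟩ v
  have hle : ∀ w ∈ segment ℝ x y, ‖v - p‖ ≤ ‖v - w‖ := by
    intro w hw
    rw [← dist_eq_norm, ← dist_eq_norm, ← hp]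
    exact Metric.infDist_le_dist_of_mem hw
  haveI : Nonempty ↑(segment ℝ x y) := ⟨⟨p, hpmem⟩⟩
  have heq : ‖v - p‖ = ⨅ w : segment ℝ x y, ‖v - w‖ := by
    have hub : ‖v - p‖ ≤ ⨅ w : segment ℝ x y, ‖v - w‖ :=
      le_ciInf fun w => hle w w.2
    have hbdd : BddBelow (Set.range fun w : segment ℝ x y => ‖v - (w : EuclideanSpace ℝ (Fin d))‖) :=
      ⟨0, fun r hr => by obtain ⟨w, rfl⟩ := hr; exact norm_nonneg _⟩
    have hlb := ciInf_le hbdd (⟨p, hpmem⟩ : segment ℝ x y)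
    exact le_antisymm hub hlb
  have hproj := (norm_eq_iInf_iff_real_inner_le_zero (convex_segment x y) hpmem).mp heq
  have hvpR : R ≤ ‖v - p‖ := by rw [← dist_eq_norm, ← hp]; exact h
  have key : ∀ z ∈ segment ℝ x y, Real.sqrt (‖z - p‖ ^ 2 + R ^ 2) ≤ ‖z - v‖ := by
    intro z hz
    have hzv : ‖z - v‖ = ‖(z - p) - (v - p)‖ := by rw [sub_sub_sub_cancel_right]
    have hinner : ⟪v - p, z - p⟫ ≤ 0 := hproj z hz
    have hsq : ‖z - p‖ ^ 2 + R ^ 2 ≤ ‖z - v‖ ^ 2 := by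
      have hexp := norm_sub_sq_real (z - p) (v - p)
      have hcm := real_inner_comm (v - p) (z - p)
      rw [hzv]
      nlinarith [hvpR, norm_nonneg (v - p)]
    calc Real.sqrt (‖z - p‖ ^ 2 + R ^ 2) ≤ Real.sqrt (‖z - v‖ ^ 2) :=
          Real.sqrt_le_sqrt hsq
      _ = ‖z - v‖ := Real.sqrt_sq (norm_nonneg _)
  have hxy : ‖x - y‖ ≤ ‖x - p‖ + ‖y - p‖ := by
    calc ‖x - y‖ = ‖(x - p) - (y - p)‖ := by rw [sub_sub_sub_cancel_right]
      _ ≤ ‖x - p‖ + ‖y - p‖ := norm_sub_le _ _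
  calc 2 * Real.sqrt (‖x - y‖ ^ 2 / 4 + R ^ 2)
      ≤ 2 * Real.sqrt ((‖x - p‖ + ‖y - p‖) ^ 2 / 4 + R ^ 2) := by
        have h2 : ‖x - y‖ ^ 2 ≤ (‖x - p‖ + ‖y - p‖) ^ 2 := by
          have := norm_nonneg (x - y); nlinarith
        have := Real.sqrt_le_sqrt (show ‖x - y‖ ^ 2 / 4 + R ^ 2 ≤ (‖x - p‖ + ‖y - p‖) ^ 2 / 4 + R ^ 2 by linarith)
        linarith
    _ ≤ Real.sqrt (‖x - p‖ ^ 2 + R ^ 2) + Real.sqrt (‖y - p‖ ^ 2 + R ^ 2) :=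
        sqrt_key _ _ _ (norm_nonneg _) (norm_nonneg _) hR
    _ ≤ ‖x - v‖ + ‖y - v‖ :=
        add_le_add (key x (left_mem_segment ℝ x y)) (key y (right_mem_segment ℝ x y))
end

section
/- Let k ∈ ℕ, let Z₁,…,Z_k be independent, identically distributed nonnegative real random variables, and let δ > 0. Then P(Z₁ + ⋯ + Z_k ≤ δk) ≤ 2^k · P(Z₁ ≤ 2δ)^{k/2}. -/
open MeasureTheory ProbabilityTheory

/-- For i.i.d. nonnegative random variables `Z₁, Z₂, …`,
`P(Z₁ + ⋯ + Z_k ≤ δk) ≤ 2^k · P(Z₁ ≤ 2δ)^{k/2}`. -/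
theorem sum_small_prob_bound
    {Ω : Type*} [MeasurableSpace Ω] (P : Measure Ω) [IsProbabilityMeasure P]
    (Z : ℕ → Ω → ℝ) (hmeas : ∀ i, Measurable (Z i))
    (hnonneg : ∀ i ω, 0 ≤ Z i ω)
    (hindep : iIndepFun Z P)
    (hident : ∀ i, IdentDistrib (Z i) (Z 0) P P)
    (k : ℕ) (δ : ℝ) (hδ : 0 < δ) :
    (P {ω | ∑ i ∈ Finset.range k, Z i ω ≤ δ * k}).toReal
      ≤ 2 ^ k * (P {ω | Z 0 ω ≤ 2 * δ}).toReal ^ ((k : ℝ) / 2) := by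
  classical
  set p : ENNReal := P {ω | Z 0 ω ≤ 2 * δ} with hp
  -- the individual events
  have hsetpre : ∀ i : ℕ, {ω | Z i ω ≤ 2 * δ} = Z i ⁻¹' Set.Iic (2 * δ) := by
    intro i; rfl
  have hmeasSet : ∀ i : ℕ, MeasurableSet {ω | Z i ω ≤ 2 * δ} := fun i =>
    (hsetpre i) ▸ (hmeas i) measurableSet_Iic
  have hidprob : ∀ i : ℕ, P {ω | Z i ω ≤ 2 * δ} = p := by
    intro i
    rw [hp, hsetpre i, hsetpre 0]
    exact (hident i).measure_mem_eq measurableSet_Iic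
  -- family of intersection events
  set A : Finset ℕ → Set Ω := fun S => ⋂ i ∈ S, {ω | Z i ω ≤ 2 * δ} with hA
  have hPA : ∀ S : Finset ℕ, P (A S) = p ^ S.card := by
    intro S
    have := hindep.meas_biInter (S := S) (s := fun i => {ω | Z i ω ≤ 2 * δ})
      (fun i _ => ⟨Set.Iic (2 * δ), measurableSet_Iic, (hsetpre i).symm⟩)
    rw [hA, this, Finset.prod_congr rfl (fun i _ => hidprob i), Finset.prod_const]
  -- the family of index sets
  set F : Finset (Finset ℕ) :=
    (Finset.range k).powerset.filter (fun S => k ≤ 2 * S.card) with hF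
  -- inclusion of the bad event in the union
  have hincl : {ω | ∑ i ∈ Finset.range k, Z i ω ≤ δ * k} ⊆ ⋃ S ∈ F, A S := by
    intro ω hω
    simp only [Set.mem_setOf_eq] at hω
    set S := (Finset.range k).filter (fun i => Z i ω ≤ 2 * δ) with hS
    set T := (Finset.range k).filter (fun i => ¬ Z i ω ≤ 2 * δ) with hT
    have hcard : S.card + T.card = k := by
      rw [hS, hT, Finset.card_filter_add_card_filter_not]
      exact Finset.card_range k
    have hTsum : (2 * δ) * T.card ≤ ∑ i ∈ Finset.range k, Z i ω := by
      calc (2 * δ) * T.card = ∑ _i ∈ T, (2 * δ) := by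
            rw [Finset.sum_const, nsmul_eq_mul, mul_comm]
        _ ≤ ∑ i ∈ T, Z i ω := by
            apply Finset.sum_le_sum
            intro i hi
            have := (Finset.mem_filter.mp hi).2
            linarith [lt_of_not_ge this]
        _ ≤ ∑ i ∈ Finset.range k, Z i ω := by
            apply Finset.sum_le_sum_of_subset_of_nonneg (Finset.filter_subset _ _)
            intro i _ _; exact hnonneg i ω
    have hT2 : (2 * T.card : ℝ) ≤ k := by
      have : (2 * δ) * T.card ≤ δ * k := le_trans hTsum hω
      nlinarith
    have hT2' : 2 * T.card ≤ k := by exact_mod_cast hT2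
    have hScard : k ≤ 2 * S.card := by omega
    have hSF : S ∈ F := by
      rw [hF, Finset.mem_filter, Finset.mem_powerset]
      exact ⟨Finset.filter_subset _ _, hScard⟩
    refine Set.mem_biUnion hSF ?_
    rw [hA]
    simp only [Set.mem_iInter]
    intro i hi
    exact (Finset.mem_filter.mp hi).2
  -- measure bound via subadditivity
  have hmeasA : ∀ S : Finset ℕ, MeasurableSet (A S) := fun S =>
    Finset.measurableSet_biInter S (fun i _ => hmeasSet i)
  have hbound : P {ω | ∑ i ∈ Finset.range k, Z i ω ≤ δ * k} ≤ ∑ S ∈ F, P (A S) :=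
    le_trans (measure_mono hincl) (measure_biUnion_finset_le F A)
  -- pass to real numbers
  have hp1 : p ≤ 1 := prob_le_one
  have hpR : p.toReal ≤ 1 := by
    simpa using ENNReal.toReal_mono ENNReal.one_ne_top hp1
  have hpR0 : 0 ≤ p.toReal := ENNReal.toReal_nonneg
  have hsum : (∑ S ∈ F, P (A S)).toReal = ∑ S ∈ F, (P (A S)).toReal := by
    exact ENNReal.toReal_sum (fun S _ => (measure_lt_top P _).ne)
  calc (P {ω | ∑ i ∈ Finset.range k, Z i ω ≤ δ * k}).toReal
      ≤ (∑ S ∈ F, P (A S)).toReal := by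
        exact ENNReal.toReal_mono
          (ENNReal.sum_lt_top.mpr (fun S _ => measure_lt_top P _)).ne hbound
    _ = ∑ S ∈ F, (P (A S)).toReal := hsum
    _ ≤ ∑ _S ∈ F, p.toReal ^ ((k : ℝ) / 2) := by
        apply Finset.sum_le_sum
        intro S hSF
        rw [hPA S, ENNReal.toReal_pow]
        have hkS : (k : ℝ) / 2 ≤ S.card := by
          have := (Finset.mem_filter.mp hSF).2
          have : (k : ℝ) ≤ 2 * S.card := by exact_mod_cast this
          linarith
        calc p.toReal ^ S.card = p.toReal ^ (S.card : ℝ) := by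
              rw [Real.rpow_natCast]
          _ ≤ p.toReal ^ ((k : ℝ) / 2) := by
              rcases eq_or_lt_of_le hpR0 with h0 | h0
              · rcases Nat.eq_zero_or_pos k with hk | hk
                · subst hk
                  simp only [Nat.cast_zero, zero_div, Real.rpow_zero]
                  rw [Real.rpow_natCast]
                  exact pow_le_one₀ hpR0 hpR
                · have hk' : (0:ℝ) < (k:ℝ)/2 := by positivity
                  have hS' : (0:ℝ) < (S.card:ℝ) := lt_of_lt_of_le hk' hkS
                  rw [← h0, Real.zero_rpow hS'.ne', Real.zero_rpow hk'.ne']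
              · exact Real.rpow_le_rpow_of_exponent_ge h0 hpR hkS
    _ = F.card * p.toReal ^ ((k : ℝ) / 2) := by
        rw [Finset.sum_const, nsmul_eq_mul]
    _ ≤ 2 ^ k * p.toReal ^ ((k : ℝ) / 2) := by
        apply mul_le_mul_of_nonneg_right _ (by positivity)
        have : F.card ≤ (Finset.range k).powerset.card :=
          Finset.card_le_card (Finset.filter_subset _ _)
        rw [Finset.card_powerset, Finset.card_range] at this
        exact_mod_cast this
end

section
/- Let f : (0,∞) → ℝ, let L ∈ ℝ and C̄ > 0. Assume that f(t)/t → L as t → ∞, and that there exists t₀ > 0 such that 2f(t) ≤ f(2t) + C̄·√t·log t for all t ≥ t₀. Then there exists t₁ > 0 such that f(t) ≤ L·t + 10·C̄·√t·log t for all t ≥ t₁. -/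
open Filter

/-- Near-superadditivity along dyadic scales upgrades the limit `f(t)/t → L` to the
quantitative bound `f(t) ≤ Lt + 10C̄√t log t` for all large `t`. -/
theorem upper_bound_of_near_superadditive
    (f : ℝ → ℝ) (L : ℝ) (Cbar : ℝ) (hC : 0 < Cbar)
    (hlim : Tendsto (fun t : ℝ => f t / t) atTop (nhds L))
    (hsup : ∃ t₀ : ℝ, 0 < t₀ ∧ ∀ t : ℝ, t₀ ≤ t →
      2 * f t ≤ f (2 * t) + Cbar * Real.sqrt t * Real.log t) :
    ∃ t₁ : ℝ, 0 < t₁ ∧ ∀ t : ℝ, t₁ ≤ t →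
      f t ≤ L * t + 10 * Cbar * Real.sqrt t * Real.log t := by
  obtain ⟨t₀, ht₀, hsup⟩ := hsup
  -- ratio of the geometric-type series
  set r : ℝ := (Real.sqrt 2)⁻¹ with hrdef
  have hs2 : (1:ℝ) < Real.sqrt 2 := by
    nlinarith [Real.sq_sqrt (by norm_num : (0:ℝ) ≤ 2), Real.sqrt_nonneg 2]
  have hs43 : (4/3:ℝ) ≤ Real.sqrt 2 := by
    nlinarith [Real.sq_sqrt (by norm_num : (0:ℝ) ≤ 2), Real.sqrt_nonneg 2]
  have hrnn : 0 ≤ r := inv_nonneg.2 (Real.sqrt_nonneg 2)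
  have hrlt : r < 1 := by
    rw [hrdef, inv_lt_one_iff₀]; right; exact hs2
  have hr34 : r ≤ 3/4 := by
    have := inv_anti₀ (by norm_num : (0:ℝ) < 4/3) hs43
    simpa [hrdef] using this.trans_eq (by norm_num)
  have h2r : Real.sqrt 2 = 2 * r := by
    rw [hrdef]
    field_simp
    exact Real.sq_sqrt (by norm_num)
  -- the series ∑ (k+1) r^k sums to at most 20
  have hS : ∀ n : ℕ, ∑ k ∈ Finset.range n, ((k:ℝ)+1) * r^k ≤ 20 := by
    have h1 : HasSum (fun k : ℕ => (k:ℝ) * r^k) (r / (1-r)^2) :=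
      hasSum_coe_mul_geometric_of_norm_lt_one
        (by rw [Real.norm_eq_abs, abs_of_nonneg hrnn]; exact hrlt)
    have h2 : HasSum (fun k : ℕ => r^k) (1-r)⁻¹ :=
      hasSum_geometric_of_lt_one hrnn hrlt
    have h3 : HasSum (fun k : ℕ => ((k:ℝ)+1) * r^k) (r / (1-r)^2 + (1-r)⁻¹) := by
      have := h1.add h2
      convert this using 2 with k
      ring
    intro n
    have hle : ∑ k ∈ Finset.range n, ((k:ℝ)+1) * r^k ≤ r / (1-r)^2 + (1-r)⁻¹ :=
      sum_le_hasSum (Finset.range n) (fun i _ => by positivity) h3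
    have h1r : (1/4:ℝ) ≤ 1 - r := by linarith
    have hb1 : r / (1-r)^2 ≤ 12 := by
      rw [div_le_iff₀ (by nlinarith)]
      nlinarith
    have hb2 : (1-r)⁻¹ ≤ 4 := by
      have := inv_anti₀ (by norm_num : (0:ℝ) < 1/4) h1r
      simpa using this.trans_eq (by norm_num)
    linarith
  have hlog2 : Real.log 2 ≤ 1 := by
    have := Real.log_two_lt_d9
    linarith
  refine ⟨max t₀ (Real.exp 1), lt_max_of_lt_left ht₀, ?_⟩
  intro t ht
  have ht0 : t₀ ≤ t := le_trans (le_max_left _ _) ht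
  have hte : Real.exp 1 ≤ t := le_trans (le_max_right _ _) ht
  have ht1 : (1:ℝ) ≤ t := by
    have := Real.add_one_le_exp 1
    linarith
  have htpos : (0:ℝ) < t := lt_of_lt_of_le one_pos ht1
  have hlog1 : 1 ≤ Real.log t := by
    rw [Real.le_log_iff_exp_le htpos]; exact hte
  -- per-step constant
  set c : ℝ := Cbar * Real.sqrt t * Real.log t / (2*t) with hcdef
  have hcnn : 0 ≤ c := by
    apply div_nonneg _ (by linarith)
    exact mul_nonneg (mul_nonneg hC.le (Real.sqrt_nonneg t)) (by linarith)
  -- main induction along dyadic scales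
  have key : ∀ n : ℕ, f t / t ≤ f (2^n * t) / (2^n * t)
      + c * ∑ k ∈ Finset.range n, ((k:ℝ)+1) * r^k := by
    intro n
    induction n with
    | zero => simp
    | succ n ih =>
      set s : ℝ := 2^n * t with hsdef
      have h2n : (1:ℝ) ≤ 2^n := one_le_pow₀ (by norm_num)
      have hspos : (0:ℝ) < s := by positivity
      have hst : t ≤ s := le_mul_of_one_le_left htpos.le h2n
      have hss : t₀ ≤ s := le_trans ht0 hst
      have hstep : f s / s ≤ f (2*s) / (2*s) + Cbar * Real.sqrt s * Real.log s / (2*s) := by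
        have h := hsup s hss
        calc f s / s = (2 * f s) / (2*s) := by
              rw [mul_div_mul_left _ _ (two_ne_zero)]
          _ ≤ (f (2*s) + Cbar * Real.sqrt s * Real.log s) / (2*s) :=
              (div_le_div_iff_of_pos_right (by positivity)).2 h
          _ = f (2*s) / (2*s) + Cbar * Real.sqrt s * Real.log s / (2*s) := add_div _ _ _
      -- bound the per-step term
      have hsqrt_s : Real.sqrt s = 2^n * r^n * Real.sqrt t := by
        rw [hsdef, Real.sqrt_mul (by positivity)]
        have h1 : ((Real.sqrt 2)^n)^2 = (2:ℝ)^n := by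
          rw [← pow_mul, mul_comm, pow_mul, Real.sq_sqrt (by norm_num : (0:ℝ) ≤ 2)]
        have h2 : Real.sqrt ((2:ℝ)^n) = (Real.sqrt 2)^n := by
          rw [← h1, Real.sqrt_sq (pow_nonneg (Real.sqrt_nonneg 2) n)]
        rw [h2, h2r, mul_pow]
      have hlogs : Real.log s ≤ ((n:ℝ)+1) * Real.log t := by
        rw [hsdef, Real.log_mul (by positivity) (ne_of_gt htpos), Real.log_pow]
        have hn0 : (0:ℝ) ≤ (n:ℝ) := Nat.cast_nonneg n
        have : Real.log 2 ≤ Real.log t := le_trans hlog2 hlog1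
        nlinarith
      have hkey : Cbar * Real.sqrt s * Real.log s / (2*s) ≤ c * (((n:ℝ)+1) * r^n) := by
        have heq : Cbar * Real.sqrt s * Real.log s / (2*s)
            = Cbar * r^n * Real.sqrt t * Real.log s / (2*t) := by
          rw [hsqrt_s, hsdef]
          have h2npos : (0:ℝ) < 2^n := by positivity
          field_simp
        rw [heq, hcdef]
        have hnum : Cbar * r^n * Real.sqrt t * Real.log s
            ≤ Cbar * Real.sqrt t * Real.log t * (((n:ℝ)+1) * r^n) := by
          have hnn : 0 ≤ Cbar * r^n * Real.sqrt t :=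
            mul_nonneg (mul_nonneg hC.le (pow_nonneg hrnn n)) (Real.sqrt_nonneg t)
          calc Cbar * r^n * Real.sqrt t * Real.log s
              ≤ Cbar * r^n * Real.sqrt t * (((n:ℝ)+1) * Real.log t) :=
                mul_le_mul_of_nonneg_left hlogs hnn
            _ = Cbar * Real.sqrt t * Real.log t * (((n:ℝ)+1) * r^n) := by ring
        calc Cbar * r^n * Real.sqrt t * Real.log s / (2*t)
            ≤ Cbar * Real.sqrt t * Real.log t * (((n:ℝ)+1) * r^n) / (2*t) :=
              (div_le_div_iff_of_pos_right (by linarith)).2 hnum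
          _ = Cbar * Real.sqrt t * Real.log t / (2*t) * (((n:ℝ)+1) * r^n) := by ring
      have h2s : 2 * s = 2^(n+1) * t := by rw [hsdef]; ring
      rw [Finset.sum_range_succ, mul_add]
      calc f t / t ≤ f s / s + c * ∑ k ∈ Finset.range n, ((k:ℝ)+1) * r^k := ih
        _ ≤ f (2*s) / (2*s) + Cbar * Real.sqrt s * Real.log s / (2*s)
              + c * ∑ k ∈ Finset.range n, ((k:ℝ)+1) * r^k := by linarith
        _ ≤ f (2^(n+1) * t) / (2^(n+1) * t) + c * ∑ k ∈ Finset.range n, ((k:ℝ)+1) * r^k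
              + c * (((n:ℝ)+1) * r^n) := by
            rw [h2s] at hkey ⊢
            push_cast at hkey ⊢
            linarith
        _ = f (2^(n+1) * t) / (2^(n+1) * t)
              + (c * ∑ k ∈ Finset.range n, ((k:ℝ)+1) * r^k + c * (((n:ℝ)+1) * r^n)) := by ring
  -- take the limit along n
  have htend : Tendsto (fun n : ℕ => f (2^n * t) / (2^n * t)) atTop (nhds L) := by
    apply hlim.comp
    exact Tendsto.atTop_mul_const htpos (tendsto_pow_atTop_atTop_of_one_lt one_lt_two)
  have hfinal : f t / t - 20 * c ≤ L := by
    apply ge_of_tendsto' htend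
    intro n
    have h1 := key n
    have h2 : c * ∑ k ∈ Finset.range n, ((k:ℝ)+1) * r^k ≤ c * 20 :=
      mul_le_mul_of_nonneg_left (hS n) hcnn
    simpa using by linarith
  have hmul : f t ≤ (L + 20 * c) * t := by
    have h2 : f t / t ≤ L + 20 * c := by linarith
    calc f t = f t / t * t := by field_simp
      _ ≤ (L + 20 * c) * t := mul_le_mul_of_nonneg_right h2 htpos.le
  have hct : 20 * c * t = 10 * Cbar * Real.sqrt t * Real.log t := by
    rw [hcdef]; field_simp; ring
  nlinarith [hmul, hct]
end

section
/- For every ε ∈ (0,1/4) and every φ > 0 there exists M > 0 such that the following holds for all x, y, v ∈ ℝ^d (d ≥ 1) with ‖x − y‖ ≥ M. Set R := ‖x − y‖^{3/4+ε} and assume dist(v, segment[x,y]) ≥ R, ‖x − v‖ ≤ 2‖x − y‖ and ‖y − v‖ ≤ 2‖x − y‖. If a, b, c are real numbers satisfying φ·a ≥ ‖x − v‖ − ‖x − v‖^{1/2+ε}, φ·b ≥ ‖y − v‖ − ‖y − v‖^{1/2+ε}, and φ·c ≤ ‖x − y‖ + ‖x − y‖^{1/2+ε}, then a + b > c. -/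
set_option maxHeartbeats 1000000

lemma sum_dist_sq_ge {d : ℕ} (x y v : EuclideanSpace ℝ (Fin d)) :
    ‖x - y‖^2 + 4 * (Metric.infDist v (segment ℝ x y))^2 ≤ (‖x - v‖ + ‖y - v‖)^2 := by
  set h := Metric.infDist v (segment ℝ x y) with hh
  have hh0 : 0 ≤ h := Metric.infDist_nonneg
  rw [norm_sub_rev x v, norm_sub_rev y v]
  set s := ‖v - x‖ with hs
  set t := ‖v - y‖ with ht
  have hs0 : (0:ℝ) ≤ s := norm_nonneg _
  have ht0 : (0:ℝ) ≤ t := norm_nonneg _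
  have hhs : h ≤ s := by
    have := Metric.infDist_le_dist_of_mem (x := v) (left_mem_segment ℝ x y)
    rwa [dist_eq_norm] at this
  have hht : h ≤ t := by
    have := Metric.infDist_le_dist_of_mem (x := v) (right_mem_segment ℝ x y)
    rwa [dist_eq_norm] at this
  set w := y - x with hwdef
  set D := ‖w‖ with hD
  have hDxy : ‖x - y‖ = D := by rw [hD, hwdef, norm_sub_rev]
  rw [hDxy]
  have hD0 : (0:ℝ) ≤ D := norm_nonneg _
  set ip := (inner ℝ (v - x) w : ℝ) with hip
  -- relation between s and t
  have hts : t^2 = s^2 - 2*ip + D^2 := by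
    have : v - y = (v - x) - w := by rw [hwdef]; try module
    rw [ht, this, @norm_sub_sq_real, ← hs, ← hip, ← hD]; try ring
  rcases lt_or_ge ip 0 with h1 | h1
  · -- closest to x side: t² ≥ s² + D², h ≤ s
    have hst : s ≤ t := by nlinarith
    nlinarith [mul_nonneg hs0 (sub_nonneg.mpr hst), mul_nonneg (sub_nonneg.mpr hhs) (by linarith : (0:ℝ) ≤ s + h)]
  rcases lt_or_ge (D^2) ip with h2 | h2
  · -- closest to y side: s² ≥ t² + D², h ≤ t
    have hst : t ≤ s := by nlinarith
    nlinarith [mul_nonneg ht0 (sub_nonneg.mpr hst), mul_nonneg (sub_nonneg.mpr hht) (by linarith : (0:ℝ) ≤ t + h)]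
  · -- projection lands on the segment
    rcases eq_or_lt_of_le hD0 with e | hw0
    · nlinarith [mul_nonneg (by linarith : (0:ℝ) ≤ s + t - 2*h) (by linarith : (0:ℝ) ≤ s + t + 2*h)]
    have hD2 : (0:ℝ) < D^2 := by positivity
    set α := ip / D^2 with hα
    have hα0 : 0 ≤ α := div_nonneg h1 hD2.le
    have hα1 : α ≤ 1 := by rw [hα, div_le_one hD2]; exact h2
    set p := x + α • w with hp
    have hpmem : p ∈ segment ℝ x y := by
      rw [segment_eq_image']
      exact ⟨α, ⟨hα0, hα1⟩, rfl⟩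
    set q := ‖v - p‖ with hq
    have hq0 : (0:ℝ) ≤ q := norm_nonneg _
    have hhq : h ≤ q := by
      have := Metric.infDist_le_dist_of_mem (x := v) hpmem
      rwa [dist_eq_norm] at this
    have horth : (inner ℝ (v - p) w : ℝ) = 0 := by
      have : v - p = (v - x) - α • w := by rw [hp]; module
      rw [this, inner_sub_left, real_inner_smul_left, real_inner_self_eq_norm_sq, ← hD, ← hip,
        hα]
      rw [div_mul_cancel₀ _ (ne_of_gt hD2), sub_self]
    have hs2 : s^2 = q^2 + (α*D)^2 := by
      have hvx : v - x = (v - p) + α • w := by rw [hp]; module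
      rw [hs, hvx, @norm_add_sq_real, real_inner_smul_right, horth, norm_smul, ← hq, ← hD]
      rw [Real.norm_eq_abs]
      rw [mul_pow, sq_abs]
      ring
    have ht2 : t^2 = q^2 + ((1-α)*D)^2 := by
      have hvy : v - y = (v - p) + (α - 1) • w := by rw [hp, hwdef]; module
      rw [ht, hvy, @norm_add_sq_real, real_inner_smul_right, horth, norm_smul, ← hq, ← hD]
      rw [Real.norm_eq_abs, mul_pow, sq_abs]
      ring
    set a := α * D with ha
    set b := (1-α) * D with hb
    have ha0 : 0 ≤ a := mul_nonneg hα0 hD0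
    have hb0 : 0 ≤ b := mul_nonneg (by linarith) hD0
    have hab : a + b = D := by rw [ha, hb]; ring
    -- key: s*t ≥ a*b + q²
    have hsq : (a*b + q^2)^2 ≤ (s*t)^2 := by
      have : (s*t)^2 = (q^2+a^2)*(q^2+b^2) := by rw [mul_pow, hs2, ht2]
      nlinarith [sq_nonneg (q*(a-b))]
    have hst : a*b + q^2 ≤ s*t := by
      have h1' := Real.sqrt_le_sqrt hsq
      rwa [Real.sqrt_sq (by positivity), Real.sqrt_sq (mul_nonneg hs0 ht0)] at h1'
    nlinarith [mul_nonneg (sub_nonneg.mpr hhq) (by linarith : (0:ℝ) ≤ q + h)]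

/-- Key deterministic inclusion in the proof of the geodesic fluctuation bound:
if `v` is at distance at least `R = ‖x−y‖^{3/4+ε}` from the segment `[x,y]` and
`a, b, c` satisfy the moderate-deviation inequalities, then `a + b > c`. -/
theorem detour_strictly_longer
    (ε : ℝ) (hε : ε ∈ Set.Ioo (0 : ℝ) (1/4)) (φ : ℝ) (hφ : 0 < φ) :
    ∃ M : ℝ, 0 < M ∧ ∀ (d : ℕ), 1 ≤ d →
      ∀ x y v : EuclideanSpace ℝ (Fin d), M ≤ ‖x - y‖ →
        ‖x - y‖ ^ ((3 : ℝ)/4 + ε) ≤ Metric.infDist v (segment ℝ x y) →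
        ‖x - v‖ ≤ 2 * ‖x - y‖ → ‖y - v‖ ≤ 2 * ‖x - y‖ →
        ∀ a b c : ℝ,
          ‖x - v‖ - ‖x - v‖ ^ ((1 : ℝ)/2 + ε) ≤ φ * a →
          ‖y - v‖ - ‖y - v‖ ^ ((1 : ℝ)/2 + ε) ≤ φ * b →
          φ * c ≤ ‖x - y‖ + ‖x - y‖ ^ ((1 : ℝ)/2 + ε) →
          c < a + b := by
  obtain ⟨hε0, hε14⟩ := hε
  refine ⟨max 1 ((7:ℝ) ^ ((1:ℝ)/ε)), lt_of_lt_of_le one_pos (le_max_left _ _), ?_⟩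
  intro d hd x y v hM hR hsv htv a b c ha hb hc
  set D := ‖x - y‖ with hD
  set h := Metric.infDist v (segment ℝ x y) with hh
  set s := ‖x - v‖ with hs
  set t := ‖y - v‖ with ht
  have hs0 : (0:ℝ) ≤ s := norm_nonneg _
  have ht0 : (0:ℝ) ≤ t := norm_nonneg _
  have hD1 : (1:ℝ) ≤ D := le_trans (le_max_left _ _) hM
  have hD0 : (0:ℝ) < D := lt_of_lt_of_le one_pos hD1
  have hh0 : (0:ℝ) ≤ h := Metric.infDist_nonneg
  -- D^ε ≥ 7
  have hDe : (7:ℝ) ≤ D ^ ε := by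
    have h7 : (7:ℝ) ^ ((1:ℝ)/ε) ≤ D := le_trans (le_max_right _ _) hM
    have := Real.rpow_le_rpow (by positivity) h7 hε0.le
    rwa [← Real.rpow_mul (by norm_num : (0:ℝ) ≤ 7), one_div, inv_mul_cancel₀ hε0.ne', Real.rpow_one] at this
  -- exponent abbreviations
  have hp0 : (0:ℝ) ≤ (1:ℝ)/2 + ε := by linarith
  have hp1 : (1:ℝ)/2 + ε ≤ 1 := by linarith
  set P := D ^ ((1:ℝ)/2 + ε) with hP
  have hPpos : (0:ℝ) < P := Real.rpow_pos_of_pos hD0 _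
  -- error terms bounded
  have herr : ∀ u : ℝ, 0 ≤ u → u ≤ 2 * D → u ^ ((1:ℝ)/2 + ε) ≤ 2 * P := by
    intro u hu0 hu2
    calc u ^ ((1:ℝ)/2 + ε) ≤ (2*D) ^ ((1:ℝ)/2 + ε) := Real.rpow_le_rpow hu0 hu2 hp0
    _ = 2 ^ ((1:ℝ)/2 + ε) * P := by rw [Real.mul_rpow (by norm_num) hD0.le, hP]
    _ ≤ 2 * P := by
        have h2 : (2:ℝ) ^ ((1:ℝ)/2 + ε) ≤ 2 ^ (1:ℝ) :=
          Real.rpow_le_rpow_of_exponent_le (by norm_num) hp1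
        rw [Real.rpow_one] at h2
        exact mul_le_mul_of_nonneg_right h2 hPpos.le
  have hs' : s ^ ((1:ℝ)/2 + ε) ≤ 2 * P := herr s hs0 hsv
  have ht' : t ^ ((1:ℝ)/2 + ε) ≤ 2 * P := herr t ht0 htv
  -- geometric gain
  have hkey : D^2 + 4 * h^2 ≤ (s + t)^2 := sum_dist_sq_ge x y v
  have htri : D ≤ s + t := by
    calc D = dist x y := by rw [hD, dist_eq_norm]
    _ ≤ dist x v + dist v y := dist_triangle x v y
    _ = s + t := by rw [dist_eq_norm, dist_eq_norm, hs, ht, norm_sub_rev v y]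
  have hgain : 4 * h^2 ≤ (s + t - D) * (5 * D) := by
    nlinarith [mul_nonneg (sub_nonneg.mpr htri) (by linarith : (0:ℝ) ≤ 4*D - s - t)]
  have hhsq : D ^ ((3:ℝ)/2 + 2*ε) ≤ h^2 := by
    have h1 : D ^ ((3:ℝ)/4 + ε) * D ^ ((3:ℝ)/4 + ε) ≤ h * h :=
      mul_le_mul hR hR (Real.rpow_nonneg hD0.le _) hh0
    calc D ^ ((3:ℝ)/2 + 2*ε) = D ^ ((3:ℝ)/4 + ε) * D ^ ((3:ℝ)/4 + ε) := by
          rw [← Real.rpow_add hD0]; ring_nf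
    _ ≤ h * h := h1
    _ = h^2 := by ring
  have hDsplit : D ^ ((3:ℝ)/2 + 2*ε) = D ^ ε * P * D := by
    rw [show (3:ℝ)/2 + 2*ε = ε + ((1:ℝ)/2 + ε) + 1 by ring, Real.rpow_add hD0,
      Real.rpow_add hD0, Real.rpow_one, hP]
  -- gain ≥ (4/5) D^ε P
  have hg2 : 4 * (D ^ ε * P) ≤ (s + t - D) * 5 := by
    have h3 : 4 * (D ^ ε * P) * D ≤ ((s + t - D) * 5) * D := by
      calc 4 * (D ^ ε * P) * D = 4 * D ^ ((3:ℝ)/2 + 2*ε) := by rw [hDsplit]; ring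
      _ ≤ 4 * h^2 := by linarith
      _ ≤ (s + t - D) * (5 * D) := hgain
      _ = ((s + t - D) * 5) * D := by ring
    exact le_of_mul_le_mul_right h3 hD0
  have hDeP : 7 * P ≤ D ^ ε * P := mul_le_mul_of_nonneg_right hDe hPpos.le
  -- conclude
  have hfin : φ * c < φ * (a + b) := by
    have : φ * (a + b) = φ * a + φ * b := by ring
    rw [this]
    nlinarith
  exact lt_of_mul_lt_mul_left hfin hφ.le
end

section
/- Let d ≥ 1, let x, y ∈ ℝ^d, let R ≥ 0, and let C ⊆ ℝ^d be a connected set with x ∈ C and y ∈ C. If dist(v, segment[x,y]) ≤ R for every v ∈ C, then the Hausdorff distance between C and segment[x,y] is at most R. -/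
/-- A connected set containing `x` and `y`, all of whose points are within distance `R`
of the segment `[x,y]`, is within Hausdorff distance `R` of that segment. -/
theorem hausdorffDist_le_of_connected_close_to_segment
    (d : ℕ) (hd : 1 ≤ d) (x y : EuclideanSpace ℝ (Fin d)) (R : ℝ) (hR : 0 ≤ R)
    (C : Set (EuclideanSpace ℝ (Fin d))) (hconn : IsConnected C)
    (hx : x ∈ C) (hy : y ∈ C)
    (hclose : ∀ v ∈ C, Metric.infDist v (segment ℝ x y) ≤ R) :
    Metric.hausdorffDist C (segment ℝ x y) ≤ R := by
  apply Metric.hausdorffDist_le_of_infDist hR hclose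
  intro p hp
  rw [segment_eq_image'] at hp
  obtain ⟨t, ⟨ht0, ht1⟩, rfl⟩ := hp
  -- continuous function measuring the projection parameter
  set g : EuclideanSpace ℝ (Fin d) → ℝ := fun v => inner ℝ (v - x) (y - x) with hg
  have hgc : ContinuousOn g C :=
    (Continuous.inner (continuous_id.sub continuous_const) continuous_const).continuousOn
  have hgx : g x = 0 := by simp [hg]
  have hgy : g y = ‖y - x‖ ^ 2 := by
    rw [hg]; exact real_inner_self_eq_norm_sq _
  have hmem : t * ‖y - x‖ ^ 2 ∈ Set.Icc (g x) (g y) := by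
    rw [hgx, hgy]
    constructor
    · positivity
    · nlinarith [sq_nonneg (‖y - x‖)]
  obtain ⟨v, hvC, hgv⟩ :=
    hconn.isPreconnected.intermediate_value hx hy hgc hmem
  -- orthogonality of v - p to y - x
  set p : EuclideanSpace ℝ (Fin d) := x + t • (y - x) with hpdef
  have horth : (inner ℝ (v - p) (y - x) : ℝ) = 0 := by
    have : v - p = (v - x) - t • (y - x) := by rw [hpdef]; abel
    rw [this, inner_sub_left, real_inner_smul_left, real_inner_self_eq_norm_sq]
    have : (inner ℝ (v - x) (y - x) : ℝ) = t * ‖y - x‖ ^ 2 := hgv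
    rw [this]; ring
  -- v - p is the closest vector: ‖v - p‖ ≤ dist v w for all w in segment
  have hkey : ∀ w ∈ segment ℝ x y, ‖v - p‖ ≤ dist v w := by
    intro w hw
    rw [segment_eq_image'] at hw
    obtain ⟨s, _, rfl⟩ := hw
    have hdecomp : v - (x + s • (y - x)) = (v - p) + (t - s) • (y - x) := by
      rw [hpdef, sub_smul]; abel
    rw [dist_eq_norm, hdecomp]
    have hsq : ‖(v - p) + (t - s) • (y - x)‖ ^ 2
        = ‖v - p‖ ^ 2 + ‖(t - s) • (y - x)‖ ^ 2 := by
      rw [norm_add_sq_real, real_inner_smul_right, horth]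
      ring
    nlinarith [norm_nonneg ((v - p) + (t - s) • (y - x)), norm_nonneg (v - p),
      sq_nonneg (‖(t - s) • (y - x)‖)]
  -- hence ‖v - p‖ ≤ infDist v segment ≤ R
  have hle : ‖v - p‖ ≤ Metric.infDist v (segment ℝ x y) := by
    by_contra h
    push_neg at h
    obtain ⟨w, hw, hww⟩ :=
      (Metric.infDist_lt_iff ⟨x, left_mem_segment ℝ x y⟩).1 h
    exact absurd (hkey w hw) (not_le.2 hww)
  have : Metric.infDist p C ≤ dist p v := Metric.infDist_le_dist_of_mem hvC
  calc Metric.infDist p C ≤ dist p v := this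
    _ = ‖v - p‖ := by rw [dist_eq_norm, norm_sub_rev]
    _ ≤ Metric.infDist v (segment ℝ x y) := hle
    _ ≤ R := hclose v hvC
end
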